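/- arXiv:1302.3722 — 2 statements merged into one kernel-verified Lean document; each statement's English description precedes it below -/
import Mathlib

section
/- Let w = 0^i (1 0)^k 1 0^j be a binary word of length n+1 with i, j ≥ 0 and k ≥ 1. Then w is generated by exactly one ordered pair (u,v) with u, v ∈ St(n,α) for some common slope α ∈ (0,1/2). -/
open scoped Classical

/-- Membership of `x` in the circular interval `[β,γ)`: it means `β ≤ x < γ`
when `β < γ`; `x ≥ β` or `x < γ` when `γ < β`; and never holds when `β = γ`. -/
def inCirc (β γ x : ℝ) : Prop :=
  if β < γ then β ≤ x ∧ x < γ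
  else if γ < β then β ≤ x ∨ x < γ
  else False

/-- The rotation word `r(α,β,γ,n)` as a list of booleans of length `n`:
its `i`-th letter is `1` iff the fractional part `{iα}` lies in `[β,γ)`. -/
noncomputable def rotWord (α β γ : ℝ) (n : ℕ) : List Bool :=
  (List.range n).map fun i => if inCirc β γ (Int.fract (i * α)) then true else false

/-- The set `R(n)` of all rotation words of length `n`. -/
def RotWords (n : ℕ) : Set (List Bool) :=
  {w | ∃ α ∈ Set.Ico (0:ℝ) 1, ∃ β ∈ Set.Ico (0:ℝ) 1, ∃ γ ∈ Set.Ico (0:ℝ) 1,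
    w = rotWord α β γ n}

/-- `numRot n = f(n)` is the number of binary rotation words of length `n`. -/
noncomputable def numRot (n : ℕ) : ℕ := (RotWords n).ncard

/-- The set `St(n,α)` of Sturmian words of length `n` and slope `α`:
rotation words `r(α,β,{β+α},n)`, `β ∈ [0,1)`. -/
def St (n : ℕ) (α : ℝ) : Set (List Bool) :=
  {w | ∃ β ∈ Set.Ico (0:ℝ) 1, w = rotWord α β (Int.fract (β + α)) n}

/-- The ordered pair `(u,v)` of words of length `n` generates the word `r` of
length `n+1`: regarding letters as integers, `r_{k+1} = r_k + u_k - v_k`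
for every `0 ≤ k ≤ n-1`. -/
def Generates (u v r : List Bool) : Prop :=
  ∀ k, k < u.length →
    ((r.getD (k+1) false).toNat : ℤ) =
      ((r.getD k false).toNat : ℤ) + ((u.getD k false).toNat : ℤ)
        - ((v.getD k false).toNat : ℤ)

/-- The set of ordered pairs `(u,v)` of Sturmian words of length `n` with a
common slope `α ∈ (0,1/2)` that generate the word `r`. -/
def GenPairs (n : ℕ) (r : List Bool) : Set (List Bool × List Bool) :=
  {p | ∃ α ∈ Set.Ioo (0:ℝ) (1/2 : ℝ), p.1 ∈ St n α ∧ p.2 ∈ St n α ∧ Generates p.1 p.2 r}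

/-- The word `0^i (1 0^l)^k 1 0^j`. -/
def pat0 (i l k j : ℕ) : List Bool :=
  List.replicate i false ++ (List.replicate k (true :: List.replicate l false)).flatten
    ++ [true] ++ List.replicate j false

/-!
A Sturmian word of slope `α` is the mechanical word `m ↦ ⌊(m+1)α + ρ⌋ - ⌊mα + ρ⌋`: its ones mark
the steps at which the orbit `{pα + ρ}` of the rotation by `α` wraps around. If two such words,
with intercepts `ρ` and `ρ - δ`, generate `r`, telescoping shows that `r_p = 1` exactly when
`{pα + ρ} < {δ}`, provided `r` has a descent `10` somewhere.

For `r = 0^i (10)^k 1 0^j` and `α < 1/2`, two steps of the rotation move the orbit by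
`-(1 - 2α)` modulo `1`, and the orbit lies in `[0, {δ})` exactly at the ones of `r`. The steps
from `i` to `i + 2` inside the arc force `1 - 2α < {δ}`, so outside the arc the orbit wraps
exactly once every two steps. This pins the first word down to an alternating word with a single
factor `00`, at the position of the last one of `r`, whatever `α` and `ρ` are; the second word is
then determined by `r`. Conversely `α = (1 - q)/2` with `q` small and a suitable intercept
realise `r`.
-/

theorem getElem?_flatten_replicate_true_false (k p : ℕ) :
    (List.replicate k [true, false]).flatten[p]? =
      if p < 2 * k then some (decide (p % 2 = 0)) else none := by
  induction k generalizing p with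
  | zero => simp
  | succ k ih =>
    rw [List.replicate_succ, List.flatten_cons]
    rcases p with _ | _ | p
    · simp
    · simp; omega
    · simp only [List.cons_append, List.nil_append, List.getElem?_cons_succ, ih]
      split_ifs <;> (try simp) <;> omega

theorem pat0_getD_eq_true_iff (i k j p : ℕ) :
    (pat0 i 1 k j).getD p false = true ↔ i ≤ p ∧ p ≤ i + 2 * k ∧ p % 2 = i % 2 := by
  simp [pat0, List.getElem?_append, List.getElem?_replicate, getElem?_flatten_replicate_true_false,
    List.getElem?_cons]
  split_ifs <;> (try simp) <;> omega

theorem pat0_length (i k j : ℕ) : (pat0 i 1 k j).length = i + 2 * k + 1 + j := by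
  simp [pat0]; ring

theorem floor_sub_floor_sub (X δ : ℝ) :
    ⌊X⌋ - ⌊X - δ⌋ = ((decide (Int.fract X < Int.fract δ)).toNat : ℤ) + ⌊δ⌋ := by
  have hsplit : ⌊X - δ⌋ = ⌊Int.fract X - Int.fract δ⌋ + (⌊X⌋ - ⌊δ⌋) := by
    rw [← Int.floor_add_intCast]; congr 1; push_cast; rw [Int.fract, Int.fract]; ring
  have hX := Int.fract_nonneg X
  have hX' := Int.fract_lt_one X
  have hδ := Int.fract_nonneg δ
  have hδ' := Int.fract_lt_one δ
  by_cases h : Int.fract X < Int.fract δ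
  · have : ⌊Int.fract X - Int.fract δ⌋ = -1 := by
      rw [Int.floor_eq_iff]; push_cast; constructor <;> linarith
    simp [hsplit, this, h]; ring
  · have : ⌊Int.fract X - Int.fract δ⌋ = 0 := by
      rw [Int.floor_eq_iff]; push_cast; constructor <;> linarith
    simp [hsplit, this, h]

noncomputable def orbit (α ρ : ℝ) (p : ℕ) : ℝ := Int.fract (p * α + ρ)

noncomputable def mechanical (α ρ : ℝ) (m : ℕ) : ℤ :=
  ⌊((m + 1 : ℕ) : ℝ) * α + ρ⌋ - ⌊(m : ℝ) * α + ρ⌋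

section Mechanical

variable {α ρ : ℝ}

theorem orbit_succ (m : ℕ) : orbit α ρ (m + 1) = orbit α ρ m + α - mechanical α ρ m := by
  rw [orbit, orbit, mechanical, Int.fract, Int.fract]; push_cast; ring

theorem mechanical_eq (hα0 : 0 ≤ α) (hα1 : α < 1) (m : ℕ) :
    mechanical α ρ m = (decide (orbit α ρ (m + 1) < α)).toNat := by
  have h := floor_sub_floor_sub (((m + 1 : ℕ) : ℝ) * α + ρ) α
  rw [Int.fract_eq_self.2 ⟨hα0, hα1⟩, Int.floor_eq_zero_iff.2 ⟨hα0, hα1⟩, add_zero] at h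
  rw [mechanical, orbit, ← h]; push_cast; ring_nf

theorem mechanical_eq_zero_or_one (hα0 : 0 ≤ α) (hα1 : α < 1) (m : ℕ) :
    mechanical α ρ m = 0 ∨ mechanical α ρ m = 1 := by
  rw [mechanical_eq hα0 hα1]; cases decide (orbit α ρ (m + 1) < α) <;> simp

theorem mechanical_add_succ_eq_zero_or_one (hα0 : 0 ≤ α) (hα : 2 * α < 1) (m : ℕ) :
    mechanical α ρ m + mechanical α ρ (m + 1) = 0 ∨
      mechanical α ρ m + mechanical α ρ (m + 1) = 1 := by
  have h := floor_sub_floor_sub (((m + 2 : ℕ) : ℝ) * α + ρ) (2 * α)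
  rw [Int.fract_eq_self.2 ⟨by linarith, hα⟩, Int.floor_eq_zero_iff.2 ⟨by linarith, hα⟩,
    add_zero] at h
  have hsum : mechanical α ρ m + mechanical α ρ (m + 1) =
      ⌊((m + 2 : ℕ) : ℝ) * α + ρ⌋ - ⌊((m + 2 : ℕ) : ℝ) * α + ρ - 2 * α⌋ := by
    simp only [mechanical]; push_cast; ring_nf
  have := Bool.toNat_le (decide (Int.fract (((m + 2 : ℕ) : ℝ) * α + ρ) < 2 * α))
  omega

theorem mechanical_eq_one_iff (hα0 : 0 ≤ α) (hα1 : α < 1) (m : ℕ) :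
    mechanical α ρ m = 1 ↔ orbit α ρ (m + 1) < orbit α ρ m := by
  rw [orbit_succ]
  rcases mechanical_eq_zero_or_one (ρ := ρ) hα0 hα1 m with h | h <;> rw [h] <;> norm_num <;>
    linarith

theorem orbit_add_two (m : ℕ) : orbit α ρ (m + 2) =
    orbit α ρ m + 2 * α - ((mechanical α ρ m + mechanical α ρ (m + 1) : ℤ) : ℝ) := by
  rw [orbit_succ, orbit_succ]; push_cast; ring

theorem mechanical_add_succ_eq_one_iff_lt (hα0 : 0 ≤ α) (hα : 2 * α < 1) (m : ℕ) :
    mechanical α ρ m + mechanical α ρ (m + 1) = 1 ↔ orbit α ρ (m + 2) < orbit α ρ m := by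
  rw [orbit_add_two]
  rcases mechanical_add_succ_eq_zero_or_one (ρ := ρ) hα0 hα m with h | h <;> rw [h] <;>
    norm_num <;> linarith

theorem mechanical_add_succ_eq_one_iff_le (hα0 : 0 ≤ α) (hα : 2 * α < 1) (m : ℕ) :
    mechanical α ρ m + mechanical α ρ (m + 1) = 1 ↔ 1 - 2 * α ≤ orbit α ρ m := by
  have h0 : 0 ≤ orbit α ρ (m + 2) := Int.fract_nonneg _
  have h1 : orbit α ρ (m + 2) < 1 := Int.fract_lt_one _
  rw [orbit_add_two] at h0 h1
  rcases mechanical_add_succ_eq_zero_or_one (ρ := ρ) hα0 hα m with h | h <;>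
    rw [h] at h0 h1 ⊢ <;> norm_num at h0 h1 ⊢ <;> linarith

theorem mechanical_eq_one_of_lt_of_le {η : ℝ} (hα0 : 0 ≤ α) (hα1 : α < 1) {m : ℕ}
    (h₁ : orbit α ρ (m + 1) < η) (h₀ : η ≤ orbit α ρ m) : mechanical α ρ m = 1 :=
  (mechanical_eq_one_iff hα0 hα1 m).2 (h₁.trans_le h₀)

theorem mechanical_eq_zero_of_lt_of_le {η : ℝ} (hα0 : 0 ≤ α) (hα1 : α < 1) {m : ℕ}
    (h₀ : orbit α ρ m < η) (h₁ : η ≤ orbit α ρ (m + 1)) : mechanical α ρ m = 0 :=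
  (mechanical_eq_zero_or_one hα0 hα1 m).resolve_right fun h =>
    ((mechanical_eq_one_iff hα0 hα1 m).1 h).not_ge (h₀.trans_le h₁).le

end Mechanical

theorem mechanical_sub_mechanical (α ρ ρ' : ℝ) (m : ℕ) :
    mechanical α ρ m - mechanical α ρ' m =
      ((decide (orbit α ρ (m + 1) < Int.fract (ρ - ρ'))).toNat : ℤ) -
        (decide (orbit α ρ m < Int.fract (ρ - ρ'))).toNat := by
  have h₁ := floor_sub_floor_sub (((m + 1 : ℕ) : ℝ) * α + ρ) (ρ - ρ')
  have h₀ := floor_sub_floor_sub ((m : ℝ) * α + ρ) (ρ - ρ')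
  rw [show ((m + 1 : ℕ) : ℝ) * α + ρ - (ρ - ρ') = ((m + 1 : ℕ) : ℝ) * α + ρ' by ring] at h₁
  rw [show (m : ℝ) * α + ρ - (ρ - ρ') = (m : ℝ) * α + ρ' by ring] at h₀
  rw [orbit, orbit, mechanical, mechanical]
  omega

theorem emod_two_of_add_succ_eq_one {w : ℕ → ℤ} {a b e : ℕ} {c : ℤ}
    (halt : ∀ m, a ≤ m → m < b → w m + w (m + 1) = 1) (hae : a ≤ e) (heb : e ≤ b)
    (he : w e = (e + c) % 2) (m : ℕ) (ham : a ≤ m) (hmb : m ≤ b) : w m = (m + c) % 2 := by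
  rcases le_total e m with hem | hme
  · induction m, hem using Nat.le_induction with
    | base => exact he
    | succ m hem ih =>
      have := halt m (by omega) (by omega)
      have := ih (by omega) (by omega)
      push_cast; omega
  · induction hme using Nat.decreasingInduction with
    | self => exact he
    | of_succ m hme ih =>
      have := halt m ham (by omega)
      have := ih (by omega) (by omega)
      push_cast at this; omega

theorem mechanical_eq_of_orbit_lt_iff {α ρ η : ℝ} {i k n : ℕ} (hα0 : 0 ≤ α) (hα : 2 * α < 1)
    (hk : 1 ≤ k) (hn : i + 2 * k ≤ n)
    (hA : ∀ p ≤ n, (orbit α ρ p < η ↔ i ≤ p ∧ p ≤ i + 2 * k ∧ p % 2 = i % 2))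
    (m : ℕ) (hm : m < n) :
    mechanical α ρ m = if m ≤ i + 2 * k then (m + i : ℤ) % 2 else (m + i + 1 : ℤ) % 2 := by
  have hα1 : α < 1 := by linarith
  have rise : ∀ m, m + 1 ≤ n → ¬ (i ≤ m ∧ m ≤ i + 2 * k ∧ m % 2 = i % 2) →
      (i ≤ m + 1 ∧ m + 1 ≤ i + 2 * k ∧ (m + 1) % 2 = i % 2) → mechanical α ρ m = 1 :=
    fun m hm h₀ h₁ => mechanical_eq_one_of_lt_of_le hα0 hα1 ((hA _ hm).2 h₁)
      (not_lt.1 (mt (hA m (by omega)).1 h₀))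
  have fall : ∀ m, m + 1 ≤ n → (i ≤ m ∧ m ≤ i + 2 * k ∧ m % 2 = i % 2) →
      ¬ (i ≤ m + 1 ∧ m + 1 ≤ i + 2 * k ∧ (m + 1) % 2 = i % 2) → mechanical α ρ m = 0 :=
    fun m hm h₀ h₁ => mechanical_eq_zero_of_lt_of_le hα0 hα1 ((hA m (by omega)).2 h₀)
      (not_lt.1 (mt (hA _ hm).1 h₁))
  have hq : 1 - 2 * α < η := by
    have h := (mechanical_add_succ_eq_one_iff_le (ρ := ρ) hα0 hα i).1 (by
      rw [fall i (by omega) (by omega) (by omega), rise (i + 1) (by omega) (by omega) (by omega)]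
      norm_num)
    exact h.trans_lt ((hA i (by omega)).2 (by omega))
  have alt : ∀ m, m ≤ n → ¬ (i ≤ m ∧ m ≤ i + 2 * k ∧ m % 2 = i % 2) →
      mechanical α ρ m + mechanical α ρ (m + 1) = 1 := fun m hm h =>
    (mechanical_add_succ_eq_one_iff_le hα0 hα m).2 (hq.le.trans (not_lt.1 (mt (hA m hm).1 h)))
  split_ifs with hmk
  · rcases hmk.lt_or_eq with hmk | rfl
    · refine emod_two_of_add_succ_eq_one (a := 0) (b := i + 2 * k - 1) (e := i + 2 * k - 1)
        (fun m _ hm => ?_) (by omega) le_rfl ?_ m (by omega) (by omega)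
      · by_cases hA : i ≤ m ∧ m ≤ i + 2 * k ∧ m % 2 = i % 2
        · rw [fall m (by omega) hA (by omega), rise (m + 1) (by omega) (by omega) (by omega)]
          norm_num
        · exact alt m (by omega) hA
      · rw [rise _ (by omega) (by omega) (by omega)]; omega
    · rw [fall _ (by omega) (by omega) (by omega)]; omega
  · have hfirst : mechanical α ρ (i + 2 * k + 1) = 0 := by
      have h₀ := fall (i + 2 * k) (by omega) (by omega) (by omega)
      have h₁ := (mechanical_add_succ_eq_zero_or_one (ρ := ρ) hα0 hα (i + 2 * k)).resolve_right
        fun h => ((mechanical_add_succ_eq_one_iff_lt hα0 hα _).1 h).not_ge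
          (((hA _ (by omega)).2 (by omega)).le.trans
            (not_lt.1 (mt (hA _ (by omega)).1 (by omega))))
      omega
    rw [emod_two_of_add_succ_eq_one (a := i + 2 * k + 1) (b := n - 1) (e := i + 2 * k + 1)
      (c := i + 1) (fun m hm _ => alt m (by omega) (by omega)) le_rfl (by omega)
      (by rw [hfirst]; omega) m (by omega) (by omega), add_assoc]

theorem exists_orbit_lt_iff (i k n : ℕ) (hn : i + 2 * k ≤ n) :
    ∃ α ρ η : ℝ, 0 < α ∧ α < 1 / 2 ∧ 0 ≤ η ∧ η < 1 ∧
      ∀ p ≤ n, (orbit α ρ p < η ↔ i ≤ p ∧ p ≤ i + 2 * k ∧ p % 2 = i % 2) := by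
  set q : ℝ := 1 / (4 * (n + 1)) with hq_def
  have hq0 : 0 < q := by positivity
  have hqn : ((n + 1 : ℤ) : ℝ) * q = 1 / 4 := by rw [hq_def]; push_cast; field_simp
  have hsmall : ∀ s : ℤ, -(n + 1) ≤ s → s ≤ n + 1 →
      -(1 / 4) ≤ (s : ℝ) * q ∧ (s : ℝ) * q ≤ 1 / 4 :=
    fun s hs₀ hs₁ => abs_le.1 <| by
      rw [abs_mul, abs_of_pos hq0, ← hqn, ← Int.cast_abs]
      exact mul_le_mul_of_nonneg_right (by exact_mod_cast abs_le.2 ⟨hs₀, hs₁⟩) hq0.le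
  have hq : q ≤ 1 / 4 := by simpa using (hsmall 1 (by omega) (by omega)).2
  have hkq := (hsmall (k + 1) (by omega) (by omega)).2
  push_cast at hkq
  refine ⟨(1 - q) / 2, k * q - i * ((1 - q) / 2), (k + 1) * q, by linarith, by linarith,
    by positivity, by linarith, fun p hp => ?_⟩
  obtain ⟨t, e, he, hpt⟩ : ∃ t e : ℤ, (e = 0 ∨ e = 1) ∧ (p : ℤ) = i + 2 * t + e :=
    ⟨((p : ℤ) - i) / 2, ((p : ℤ) - i) % 2, by omega, by omega⟩
  -- two rotation steps move the orbit back by `q`, so `p = i + 2t + e` sits at `(k - t) q + e α`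
  have horbit : orbit ((1 - q) / 2) (k * q - i * ((1 - q) / 2)) p =
      Int.fract (((k - t : ℤ) : ℝ) * q + e * ((1 - q) / 2)) := by
    have hpR : (p : ℝ) = i + 2 * t + e := by exact_mod_cast hpt
    exact Int.fract_eq_fract.2 ⟨t, by rw [hpR]; push_cast; ring⟩
  have hη : ((k : ℝ) + 1) * q = ((k - t : ℤ) : ℝ) * q + ((t + 1 : ℤ) : ℝ) * q := by
    push_cast; ring
  obtain ⟨ha₀, ha₁⟩ := hsmall (k - t) (by omega) (by omega)
  obtain ⟨hb₀, hb₁⟩ := hsmall (t + 1) (by omega) (by omega)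
  rw [horbit, hη]
  rcases he with rfl | rfl
  · rw [Int.cast_zero, zero_mul, add_zero]
    rcases le_or_gt t k with htk | htk
    · have ha : 0 ≤ ((k - t : ℤ) : ℝ) * q := mul_nonneg (by exact_mod_cast (by omega)) hq0.le
      rw [Int.fract_eq_self.2 ⟨ha, by linarith⟩, lt_add_iff_pos_right,
        mul_pos_iff_of_pos_right hq0, Int.cast_pos]
      omega
    · have ha : ((k - t : ℤ) : ℝ) * q < 0 :=
        mul_neg_of_neg_of_pos (by exact_mod_cast (by omega)) hq0
      have hfract : Int.fract (((k - t : ℤ) : ℝ) * q) = 1 + ((k - t : ℤ) : ℝ) * q :=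
        Int.fract_eq_iff.2 ⟨by linarith, by linarith, -1, by push_cast; ring⟩
      rw [hfract]
      exact iff_of_false (by linarith) (by omega)
  · rw [Int.cast_one, one_mul, Int.fract_eq_self.2 ⟨by linarith, by linarith⟩]
    exact iff_of_false (by linarith) (by omega)

theorem inCirc_fract_add_iff {α β x : ℝ} (hα0 : 0 ≤ α) (hα1 : α < 1) (hβ0 : 0 ≤ β)
    (hβ1 : β < 1) (hx0 : 0 ≤ x) (hx1 : x < 1) :
    inCirc β (Int.fract (β + α)) x ↔ Int.fract (x - β) < α := by
  have hγ : Int.fract (β + α) = if β + α < 1 then β + α else β + α - 1 := by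
    split_ifs with h
    · exact Int.fract_eq_iff.2 ⟨by linarith, h, 0, by simp⟩
    · exact Int.fract_eq_iff.2 ⟨by linarith, by linarith, 1, by simp⟩
  have hx : Int.fract (x - β) = if β ≤ x then x - β else x - β + 1 := by
    split_ifs with h
    · exact Int.fract_eq_iff.2 ⟨by linarith, by linarith, 0, by simp⟩
    · exact Int.fract_eq_iff.2 ⟨by linarith, by linarith, -1, by simp⟩
  rw [hγ, hx, inCirc]
  split_ifs <;> grind

theorem toNat_getD_rotWord {α β : ℝ} (hα0 : 0 ≤ α) (hα1 : α < 1) (hβ0 : 0 ≤ β) (hβ1 : β < 1)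
    {n m : ℕ} (hm : m < n) :
    (((rotWord α β (Int.fract (β + α)) n).getD m false).toNat : ℤ) =
      mechanical α (-α - β) m := by
  have hfract : Int.fract (((m + 1 : ℕ) : ℝ) * α + (-α - β)) =
      Int.fract (Int.fract ((m : ℝ) * α) - β) :=
    Int.fract_eq_fract.2 ⟨⌊(m : ℝ) * α⌋, by rw [Int.fract]; push_cast; ring⟩
  rw [mechanical_eq hα0 hα1, orbit, hfract, List.getD_eq_getElem _ _ (by simpa [rotWord])]
  simp [rotWord, ← List.map_eq_flatMap,
    inCirc_fract_add_iff hα0 hα1 hβ0 hβ1 (Int.fract_nonneg _) (Int.fract_lt_one _)]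

theorem toNat_getD_rotWord_sub {α β β' : ℝ} (hα0 : 0 ≤ α) (hα1 : α < 1) (hβ0 : 0 ≤ β)
    (hβ1 : β < 1) (hβ'0 : 0 ≤ β') (hβ'1 : β' < 1) {n m : ℕ} (hm : m < n) :
    (((rotWord α β (Int.fract (β + α)) n).getD m false).toNat : ℤ) -
        ((rotWord α β' (Int.fract (β' + α)) n).getD m false).toNat =
      ((decide (orbit α (-α - β) (m + 1) < Int.fract (β' - β))).toNat : ℤ) -
        (decide (orbit α (-α - β) m < Int.fract (β' - β))).toNat := by
  rw [toNat_getD_rotWord hα0 hα1 hβ0 hβ1 hm, toNat_getD_rotWord hα0 hα1 hβ'0 hβ'1 hm,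
    mechanical_sub_mechanical, show -α - β - (-α - β') = β' - β by ring]

theorem length_of_mem_St {n : ℕ} {α : ℝ} {w : List Bool} (hw : w ∈ St n α) : w.length = n := by
  obtain ⟨β, -, rfl⟩ := hw
  simp [rotWord]

theorem Bool.toNat_injective : Function.Injective Bool.toNat := by
  intro a b h; cases a <;> cases b <;> simp_all

theorem eq_of_toNat_getD_eq {l l' : List Bool} {n : ℕ} (hl : l.length = n)
    (hl' : l'.length = n) (h : ∀ m < n, ((l.getD m false).toNat : ℤ) = (l'.getD m false).toNat) :
    l = l' := by
  refine List.ext_getElem (hl.trans hl'.symm) fun m hm hm' => Bool.toNat_injective ?_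
  have := h m (hl ▸ hm)
  rw [List.getD_eq_getElem _ _ hm, List.getD_eq_getElem _ _ hm'] at this
  exact_mod_cast this

theorem Generates.right_unique {u v v' r : List Bool} (h : Generates u v r)
    (h' : Generates u v' r) (hv : v.length = u.length) (hv' : v'.length = u.length) : v = v' :=
  eq_of_toNat_getD_eq hv hv' fun m hm => by have := h m hm; have := h' m hm; omega

theorem getD_eq_of_generates {u v r : List Bool} {n p₀ : ℕ} {c : ℕ → Bool}
    (hu : u.length = n) (huv : ∀ m < n, ((u.getD m false).toNat : ℤ) - (v.getD m false).toNat =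
      (c (m + 1)).toNat - (c m).toNat)
    (hgen : Generates u v r) (hp₀ : p₀ + 1 ≤ n) (h₁ : r.getD p₀ false = true)
    (h₀ : r.getD (p₀ + 1) false = false) (p : ℕ) (hp : p ≤ n) : r.getD p false = c p := by
  set d : ℕ → ℤ := fun p => ((r.getD p false).toNat : ℤ) - (c p).toNat with hd
  have hconst : ∀ p ≤ n, d p = d 0 := by
    intro p hp
    induction p with
    | zero => rfl
    | succ p ih =>
      have := hgen p (by omega)
      have := huv p (by omega)
      have := ih (by omega)
      simp only [hd] at *
      omega
  have hd₀ : d 0 = 0 := by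
    have h₁' := hconst p₀ (by omega)
    have h₀' := hconst (p₀ + 1) hp₀
    have := Bool.toNat_le (c p₀)
    have := Bool.toNat_le (c (p₀ + 1))
    simp only [hd, h₁, h₀, Bool.toNat_true, Bool.toNat_false] at h₁' h₀' ⊢
    omega
  refine Bool.toNat_injective ?_
  have := hconst p hp
  simp only [hd] at this hd₀
  omega

theorem generates_of_getD_eq {u v r : List Bool} {n : ℕ} {c : ℕ → Bool}
    (hu : u.length = n) (huv : ∀ m < n, ((u.getD m false).toNat : ℤ) - (v.getD m false).toNat =
      (c (m + 1)).toNat - (c m).toNat)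
    (h : ∀ p ≤ n, r.getD p false = c p) : Generates u v r := by
  intro m hm
  rw [hu] at hm
  rw [h m hm.le, h (m + 1) hm]
  linarith [huv m hm]

theorem toNat_getD_fst_of_mem_genPairs {n i k j : ℕ} (hk : 1 ≤ k) (hn : i + 2 * k ≤ n)
    {u v : List Bool} (h : (u, v) ∈ GenPairs n (pat0 i 1 k j)) (m : ℕ) (hm : m < n) :
    ((u.getD m false).toNat : ℤ) =
      if m ≤ i + 2 * k then (m + i : ℤ) % 2 else (m + i + 1 : ℤ) % 2 := by
  obtain ⟨α, ⟨hα0, hα⟩, ⟨β, ⟨hβ0, hβ1⟩, rfl⟩, ⟨β', ⟨hβ'0, hβ'1⟩, rfl⟩, hgen⟩ := h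
  have hα1 : α < 1 := by linarith
  have hr := getD_eq_of_generates (n := n)
    (c := fun p => decide (orbit α (-α - β) p < Int.fract (β' - β))) (by simp [rotWord])
    (fun m hm => toNat_getD_rotWord_sub hα0.le hα1 hβ0 hβ1 hβ'0 hβ'1 hm) hgen (p₀ := i)
    (by omega) ((pat0_getD_eq_true_iff ..).2 (by omega))
    (Bool.eq_false_iff.2 ((pat0_getD_eq_true_iff ..).not.2 (by omega)))
  rw [toNat_getD_rotWord hα0.le hα1 hβ0 hβ1 hm]
  refine mechanical_eq_of_orbit_lt_iff (η := Int.fract (β' - β)) hα0.le (by linarith) hk hn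
    (fun p hp => ?_) m hm
  rw [← pat0_getD_eq_true_iff i k j, hr p hp, decide_eq_true_iff]

theorem genPairs_pat0_subsingleton {n i k j : ℕ} (hk : 1 ≤ k) (hn : i + 2 * k ≤ n) :
    (GenPairs n (pat0 i 1 k j)).Subsingleton := by
  rintro ⟨u, v⟩ h ⟨u', v'⟩ h'
  obtain ⟨α, -, hu, hv, hgen⟩ := id h
  obtain ⟨α', -, hu', hv', hgen'⟩ := id h'
  obtain rfl : u = u' := eq_of_toNat_getD_eq (length_of_mem_St hu) (length_of_mem_St hu')
    fun m hm => by rw [toNat_getD_fst_of_mem_genPairs hk hn h m hm,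
      toNat_getD_fst_of_mem_genPairs hk hn h' m hm]
  exact Prod.ext rfl <| Generates.right_unique hgen hgen'
    ((length_of_mem_St hv).trans (length_of_mem_St hu).symm)
    ((length_of_mem_St hv').trans (length_of_mem_St hu).symm)

theorem genPairs_pat0_nonempty {n i k : ℕ} (j : ℕ) (hn : i + 2 * k ≤ n) :
    (GenPairs n (pat0 i 1 k j)).Nonempty := by
  obtain ⟨α, ρ, η, hα0, hα, hη0, hη1, hA⟩ := exists_orbit_lt_iff i k n hn
  obtain ⟨β, hβ0, hβ1, z, hβρ⟩ : ∃ β : ℝ, 0 ≤ β ∧ β < 1 ∧ ∃ z : ℤ, -α - β = ρ + z :=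
    ⟨Int.fract (-α - ρ), Int.fract_nonneg _, Int.fract_lt_one _, ⌊-α - ρ⌋,
      by rw [Int.fract]; ring⟩
  obtain ⟨β', hβ'0, hβ'1, hβ'β⟩ : ∃ β' : ℝ, 0 ≤ β' ∧ β' < 1 ∧ Int.fract (β' - β) = η :=
    ⟨Int.fract (β + η), Int.fract_nonneg _, Int.fract_lt_one _,
      Int.fract_eq_iff.2 ⟨hη0, hη1, -⌊β + η⌋, by rw [Int.fract]; push_cast; ring⟩⟩
  have horbit (p : ℕ) : orbit α (-α - β) p = orbit α ρ p :=
    Int.fract_eq_fract.2 ⟨z, by linarith⟩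
  refine ⟨(rotWord α β (Int.fract (β + α)) n, rotWord α β' (Int.fract (β' + α)) n), α,
    ⟨hα0, hα⟩, ⟨β, ⟨hβ0, hβ1⟩, rfl⟩, ⟨β', ⟨hβ'0, hβ'1⟩, rfl⟩,
    generates_of_getD_eq (c := fun p => decide (orbit α (-α - β) p < Int.fract (β' - β)))
      (by simp [rotWord])
      (fun m hm => toNat_getD_rotWord_sub hα0.le (by linarith) hβ0 hβ1 hβ'0 hβ'1 hm)
      fun p hp => ?_⟩
  rw [Bool.eq_iff_iff, decide_eq_true_iff, pat0_getD_eq_true_iff, hβ'β, horbit, hA p hp]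

/-- A word `w = 0^i (1 0)^k 1 0^j` of length `n+1` with `i, j ≥ 0`, `k ≥ 1` is
generated by exactly one pair of Sturmian words of a common slope in `(0,1/2)`. -/
theorem count_pairs_l_eq_one (n i j k : ℕ) (hk : 1 ≤ k)
    (hlen : (pat0 i 1 k j).length = n + 1) :
    (GenPairs n (pat0 i 1 k j)).ncard = 1 := by
  have hn : i + 2 * k ≤ n := by rw [pat0_length] at hlen; omega
  obtain ⟨p, hp⟩ := genPairs_pat0_nonempty j hn
  exact Set.ncard_eq_one.2 ⟨p, (genPairs_pat0_subsingleton hk hn).eq_singleton_of_mem hp⟩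
end

section
/- For every n ≥ 1, every slope α ∈ (0,1/2) and all u, v ∈ St(n,α), there exists a rotation word r ∈ R(n+1) that is generated by the ordered pair (u,v). -/
open scoped Classical

/-!
On the circle, the indicator of the arc `[{b}, {c})` at the point `{x}` is
`⌊x - b⌋ - ⌊x - c⌋ - ⌊c - b⌋`, an expression insensitive to integer shifts of `x`, `b`, `c`.
For `u = r(α, β, {β+α})`, `v = r(α, γ, {γ+α})` and the candidate `r = r(α, {β+α}, {γ+α})`
this gives
`u_k = ⌊kα - β⌋ - ⌊kα - β - α⌋ - ⌊α⌋`, `v_k = ⌊kα - γ⌋ - ⌊kα - γ - α⌋ - ⌊α⌋` and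
`r_k = ⌊kα - β - α⌋ - ⌊kα - γ - α⌋ - ⌊γ - β⌋`, so `r_{k+1} - r_k = u_k - v_k`.
-/

lemma fract_mem_Ico (y : ℝ) : Int.fract y ∈ Set.Ico (0:ℝ) 1 :=
  ⟨Int.fract_nonneg y, Int.fract_lt_one y⟩

lemma floor_sub_of_mem_Ico {x y : ℝ} (hx : x ∈ Set.Ico (0:ℝ) 1) (hy : y ∈ Set.Ico (0:ℝ) 1) :
    ⌊x - y⌋ = if x < y then -1 else 0 := by
  obtain ⟨hx0, hx1⟩ := hx
  obtain ⟨hy0, hy1⟩ := hy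
  split_ifs with h <;> rw [Int.floor_eq_iff] <;> push_cast <;> constructor <;> linarith

lemma ite_inCirc_eq_floor {β γ x : ℝ} (hβ : β ∈ Set.Ico (0:ℝ) 1) (hγ : γ ∈ Set.Ico (0:ℝ) 1)
    (hx : x ∈ Set.Ico (0:ℝ) 1) :
    (if inCirc β γ x then 1 else 0 : ℤ) = ⌊x - β⌋ - ⌊x - γ⌋ - ⌊γ - β⌋ := by
  rw [floor_sub_of_mem_Ico hx hβ, floor_sub_of_mem_Ico hx hγ, floor_sub_of_mem_Ico hγ hβ]
  unfold inCirc
  split_ifs <;> simp_all <;> linarith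

lemma ite_inCirc_fract (x b c : ℝ) :
    (if inCirc (Int.fract b) (Int.fract c) (Int.fract x) then 1 else 0 : ℤ) =
      ⌊x - b⌋ - ⌊x - c⌋ - ⌊c - b⌋ := by
  have floor_fract_sub (y z : ℝ) : ⌊Int.fract y - Int.fract z⌋ = ⌊y - z⌋ - ⌊y⌋ + ⌊z⌋ := by
    rw [show Int.fract y - Int.fract z = y - z + ((-⌊y⌋ + ⌊z⌋ : ℤ) : ℝ) by
      unfold Int.fract; push_cast; ring, Int.floor_add_intCast]
    ring
  rw [ite_inCirc_eq_floor (fract_mem_Ico b) (fract_mem_Ico c) (fract_mem_Ico x),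
    floor_fract_sub, floor_fract_sub, floor_fract_sub]
  ring

lemma rotWord_eq_map (α β γ : ℝ) (n : ℕ) :
    rotWord α β γ n = (List.range n).map fun i : ℕ => decide (inCirc β γ (Int.fract (i * α))) := by
  simp [rotWord, List.map_eq_flatMap, List.flatMap_assoc]

lemma rotWord_length (α β γ : ℝ) (n : ℕ) : (rotWord α β γ n).length = n := by
  simp [rotWord_eq_map]

lemma rotWord_getD_toNat {α β γ : ℝ} {n k : ℕ} (hk : k < n) :
    (((rotWord α β γ n).getD k false).toNat : ℤ) =
      if inCirc β γ (Int.fract (k * α)) then 1 else 0 := by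
  by_cases h : inCirc β γ (Int.fract (k * α)) <;> simp [rotWord_eq_map, hk, h]

lemma rotWord_fract_getD_toNat (α b c : ℝ) {n k : ℕ} (hk : k < n) :
    (((rotWord α (Int.fract b) (Int.fract c) n).getD k false).toNat : ℤ) =
      ⌊k * α - b⌋ - ⌊k * α - c⌋ - ⌊c - b⌋ := by
  rw [rotWord_getD_toNat hk, ← ite_inCirc_fract]

lemma sturmian_getD_toNat (α : ℝ) {b : ℝ} (hb : b ∈ Set.Ico (0:ℝ) 1) {n k : ℕ} (hk : k < n) :
    (((rotWord α b (Int.fract (b + α)) n).getD k false).toNat : ℤ) =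
      ⌊k * α - b⌋ - ⌊k * α - (b + α)⌋ - ⌊α⌋ := by
  have h := rotWord_fract_getD_toNat α b (b + α) hk
  rwa [Int.fract_eq_self.2 hb, add_sub_cancel_left] at h

theorem pair_generates_rotation_word_general (n : ℕ) (α : ℝ)
    (hα : α ∈ Set.Ioo (0:ℝ) (1/2 : ℝ)) (u v : List Bool)
    (hu : u ∈ St n α) (hv : v ∈ St n α) :
    ∃ r ∈ RotWords (n + 1), Generates u v r := by
  obtain ⟨β, hβ, rfl⟩ := hu
  obtain ⟨γ, hγ, rfl⟩ := hv
  refine ⟨rotWord α (Int.fract (β + α)) (Int.fract (γ + α)) (n + 1),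
    ⟨α, ⟨hα.1.le, by linarith [hα.2]⟩, _, fract_mem_Ico _, _, fract_mem_Ico _, rfl⟩, ?_⟩
  intro k hk
  rw [rotWord_length] at hk
  have shift (b : ℝ) : ⌊((k + 1 : ℕ) : ℝ) * α - (b + α)⌋ = ⌊k * α - b⌋ := by
    push_cast; ring_nf
  rw [rotWord_fract_getD_toNat _ _ _ (by omega : k + 1 < n + 1),
    rotWord_fract_getD_toNat _ _ _ (by omega : k < n + 1),
    sturmian_getD_toNat α hβ hk, sturmian_getD_toNat α hγ hk, shift, shift]
  ring

/-- For every `n ≥ 1`, every slope `α ∈ (0,1/2)` and all `u, v ∈ St(n,α)`,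
there exists a rotation word `r ∈ R(n+1)` generated by the pair `(u,v)`. -/
theorem pair_generates_rotation_word (n : ℕ) (hn : 1 ≤ n) (α : ℝ)
    (hα : α ∈ Set.Ioo (0:ℝ) (1/2 : ℝ)) (u v : List Bool)
    (hu : u ∈ St n α) (hv : v ∈ St n α) :
    ∃ r ∈ RotWords (n + 1), Generates u v r :=
  pair_generates_rotation_word_general n α hα u v hu hv
end
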